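/- For every labeled rooted plane tree T in L'_n, the digraph g(T) on vertex set {1,...,n} — with edges (T_(x,i), T_(x,i+1)) for consecutive children of any vertex x, edge (last child of 0, first child of 0), and for x ≠ 0 edges (last child of x, x) and (x, first child of x) — has exactly one Eulerian tour up to cyclic shift. -/

import Mathlib

/-- A labeled rooted plane tree: a root label together with a linearly ordered list of
subtrees. -/
inductive PTree : Type where
  | node : ℕ → List PTree → PTree

/-- The label of the root of the tree. -/
def PTree.label : PTree → ℕ
  | .node a _ => a

/-- The ordered list of children of the root. -/
def PTree.children : PTree → List PTree
  | .node _ ts => ts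

mutual
/-- The list of all labels occurring in the tree. -/
def PTree.labels : PTree → List ℕ
  | .node a ts => a :: labelsList ts
/-- The list of all labels occurring in a forest. -/
def labelsList : List PTree → List ℕ
  | [] => []
  | t :: ts => t.labels ++ labelsList ts
end

/-- `T` is a member of `Lₙ`: a labeled rooted plane tree with `n+1` vertices labeled
bijectively by `{0,…,n}`, whose root is labeled `0` and whose leftmost root-child is
labeled `1`. -/
def InL (n : ℕ) (T : PTree) : Prop :=
  T.labels.Nodup ∧ (∀ k : ℕ, k ∈ T.labels ↔ k ≤ n) ∧ T.label = 0 ∧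
    ∃ t ts, T = .node 0 (t :: ts) ∧ t.label = 1

/-- `T` is a member of `L'ₙ ⊆ Lₙ`: additionally, the vertex labeled `2` lies in the
subtree rooted at the vertex labeled `1` (the leftmost child of the root). -/
def InL' (n : ℕ) (T : PTree) : Prop :=
  InL n T ∧ ∃ t ts, T = .node 0 (t :: ts) ∧ 2 ∈ t.labels

/-- The list of directed edges traversed by the cyclic sequence of vertices `l`
(consecutive pairs, including the closing pair from the last to the first vertex). -/
def cyclicPairs {V : Type*} (l : List V) : List (V × V) := l.zip (l.rotate 1)

/-- `l` is an Eulerian tour of the digraph with edge set `E`: the cyclically consecutive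
pairs of `l` are pairwise distinct and are exactly the edges of `E`. -/
def IsEulerTour {V : Type*} [DecidableEq V] (E : Finset (V × V)) (l : List V) : Prop :=
  l ≠ [] ∧ (cyclicPairs l).Nodup ∧ (cyclicPairs l).toFinset = E

/-- The digraph with edge set `E` has exactly one Eulerian tour up to cyclic shift. -/
def UniqueEulerTour {V : Type*} [DecidableEq V] (E : Finset (V × V)) : Prop :=
  ∃ l, IsEulerTour E l ∧ ∀ l', IsEulerTour E l' → l'.IsRotated l

def Loopless {V : Type*} (E : Finset (V × V)) : Prop := ∀ e ∈ E, e.1 ≠ e.2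

def NoIsolated {V : Type*} (E : Finset (V × V)) : Prop :=
  ∀ v : V, ∃ e ∈ E, e.1 = v ∨ e.2 = v

def outdeg {V : Type*} [DecidableEq V] (E : Finset (V × V)) (v : V) : ℕ :=
  (E.filter (fun p => p.1 = v)).card

def indeg {V : Type*} [DecidableEq V] (E : Finset (V × V)) (v : V) : ℕ :=
  (E.filter (fun p => p.2 = v)).card

/-- `l` is an oriented simple path from `u` to `v` using edges of `E`. -/
def IsPathIn {V : Type*} (E : Finset (V × V)) (u v : V) (l : List V) : Prop :=
  l.Chain' (fun a b => (a, b) ∈ E) ∧ l.head? = some u ∧ l.getLast? = some v ∧ l.Nodup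

/-- `l` (read cyclically) is a simple oriented cycle of the digraph `E`. -/
def IsSimpleCycleList {V : Type*} (E : Finset (V × V)) (l : List V) : Prop :=
  l ≠ [] ∧ l.Nodup ∧ ∀ p ∈ cyclicPairs l, p ∈ E

mutual
/-- The edges of `g(T)` contributed at each vertex: consecutive children are joined
left to right; the children of the root `0` are closed into a cycle (last child to
first child, when there are at least two children); for a non-root vertex `x` with
children, the edges (last child of `x`, `x`) and (`x`, first child of `x`) are added. -/
def gEdges : Bool → PTree → List (ℕ × ℕ)
  | isRoot, .node a ts =>
    (if ts.isEmpty then []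
     else if isRoot then
       (if ts.length ≤ 1 then [] else cyclicPairs (ts.map PTree.label))
     else cyclicPairs (a :: ts.map PTree.label)) ++ gEdgesList ts
def gEdgesList : List PTree → List (ℕ × ℕ)
  | [] => []
  | t :: ts => gEdges false t ++ gEdgesList ts
end

/-- The digraph `g(T)` on the vertex set `{1,…,n}` associated to a tree `T ∈ L'ₙ`. -/
def gDigraph (T : PTree) : Finset (ℕ × ℕ) := (gEdges true T).toFinset

/-!
The digraph `g(T)` is an edge-disjoint union of simple cycles: one through the children of the
root (or, if `1` is the only child of the root, through `1` and its children), and for every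
other internal vertex `x` the cycle `x → first child → ⋯ → last child → x`. Add these cycles one
at a time, parents before children. Each new cycle meets the graph built so far in a single
vertex `x`, which so far has in-degree one; its other vertices are new and get out-degree one.
So an Euler tour that leaves `x` along the new cycle has to run round the whole cycle back to
`x`, and the rest of the tour is an Euler tour of the old graph. That tour is unique up to
rotation and passes through `x` only once, so the new tour is unique up to rotation as well.
-/

namespace List

variable {V : Type*}

lemma exists_rotate_eq_cons {l : List V} {x : V} (h : x ∈ l) : ∃ n s, l.rotate n = x :: s := by
  obtain ⟨i, hi, rfl⟩ := mem_iff_getElem.mp h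
  obtain ⟨y, s, hys⟩ := exists_cons_of_ne_nil (l := l.rotate i) (by simpa using ne_nil_of_mem h)
  have hy := head?_rotate hi
  rw [hys, head?_cons, getElem?_eq_getElem hi, Option.some_inj] at hy
  exact ⟨i, s, hy ▸ hys⟩

lemma tail_eq_of_isRotated_cons {v : V} {s t : List V} (h : (v :: s) ~r (v :: t)) (hv : v ∉ s) :
    s = t := by
  obtain ⟨n, hn, hrot⟩ := isRotated_iff_mod.mp h
  rcases n with _ | k
  · simpa using hrot
  rw [rotate_eq_drop_append_take hn, drop_succ_cons, take_succ_cons] at hrot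
  rcases (Nat.lt_or_ge k s.length) with hk | hk
  · rw [drop_eq_getElem_cons hk, cons_append, cons.injEq] at hrot
    exact absurd (hrot.1 ▸ getElem_mem hk) hv
  · simpa [drop_eq_nil_of_le hk, take_of_length_le hk] using hrot

lemma isChain_mem_zip_cons (a : V) (m : List V) :
    IsChain (fun p q => (p, q) ∈ (a :: m).zip m) (a :: m) := by
  induction m generalizing a with
  | nil => exact .singleton a
  | cons b m ih =>
    exact isChain_cons_cons.mpr ⟨by simp, (ih b).imp fun p q h => by simp [h]⟩

lemma IsChain.isPrefix_of_functional {R : V → V → Prop} {C W : List V} (hC : IsChain R C)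
    (hW : IsChain R W) (hR : ∀ x ∈ C.dropLast, ∀ y z, R x y → R x z → y = z)
    (hhead : C.head? = W.head?) (hlen : C.length ≤ W.length) : C <+: W := by
  induction C generalizing W with
  | nil => exact nil_prefix
  | cons a C ih =>
    obtain ⟨_, W, rfl⟩ : ∃ b W', W = b :: W' := exists_cons_of_length_pos (by simp at hlen; omega)
    obtain rfl : a = _ := by simpa using hhead
    rcases C with _ | ⟨b, C⟩
    · exact cons_prefix_cons.mpr ⟨rfl, nil_prefix⟩
    obtain ⟨w, W, rfl⟩ : ∃ w W', W = w :: W' := exists_cons_of_length_pos (by simp at hlen; omega)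
    have hab := isChain_cons_cons.mp hC
    have haw := isChain_cons_cons.mp hW
    obtain rfl : b = w := hR a (by simp) b w hab.1 haw.1
    refine cons_prefix_cons.mpr ⟨rfl, ih hab.2 haw.2 (fun x hx => hR x (by simp [hx])) rfl
      (by simpa using hlen)⟩

end List

section CyclicPairs

open List

variable {V : Type*}

lemma cyclicPairs_cons (x : V) (s : List V) :
    cyclicPairs (x :: s) = (x :: s).zip (s ++ [x]) := by
  simp [cyclicPairs]

@[simp]
lemma length_cyclicPairs (l : List V) : (cyclicPairs l).length = l.length := by
  simp [cyclicPairs]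

lemma map_fst_cyclicPairs (l : List V) : (cyclicPairs l).map Prod.fst = l :=
  map_fst_zip (by simp)

lemma map_snd_cyclicPairs (l : List V) : (cyclicPairs l).map Prod.snd = l.rotate 1 :=
  map_snd_zip (by simp)

lemma cyclicPairs_rotate (l : List V) (n : ℕ) :
    cyclicPairs (l.rotate n) = (cyclicPairs l).rotate n := by
  rw [cyclicPairs, cyclicPairs, zip, zipWith_rotate_distrib _ _ _ _ (by simp), rotate_rotate,
    rotate_rotate, Nat.add_comm]

lemma nodup_cyclicPairs {l : List V} (h : l.Nodup) : (cyclicPairs l).Nodup :=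
  Nodup.of_map Prod.fst (by rwa [map_fst_cyclicPairs])

lemma fst_mem_of_mem_cyclicPairs {l : List V} {p : V × V} (h : p ∈ cyclicPairs l) : p.1 ∈ l :=
  map_fst_cyclicPairs l ▸ mem_map_of_mem h

lemma snd_mem_of_mem_cyclicPairs {l : List V} {p : V × V} (h : p ∈ cyclicPairs l) : p.2 ∈ l :=
  (rotate_perm l 1).mem_iff.mp (map_snd_cyclicPairs l ▸ mem_map_of_mem h)

lemma snd_eq_of_mem_cyclicPairs {l : List V} (hl : l.Nodup) {x y z : V}
    (hy : (x, y) ∈ cyclicPairs l) (hz : (x, z) ∈ cyclicPairs l) : y = z :=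
  congrArg Prod.snd (inj_on_of_nodup_map (map_fst_cyclicPairs l ▸ hl) hy hz rfl)

lemma cyclicPairs_cons_append_cons (v : V) (c t : List V) :
    cyclicPairs (v :: c ++ v :: t) = cyclicPairs (v :: c) ++ cyclicPairs (v :: t) := by
  rw [cons_append, cyclicPairs_cons, cyclicPairs_cons, cyclicPairs_cons,
    show c ++ v :: t ++ [v] = (c ++ [v]) ++ (t ++ [v]) by simp, ← cons_append,
    zip_append (by simp)]

lemma mem_cyclicPairs_cons_cons (x y : V) (s : List V) : (x, y) ∈ cyclicPairs (x :: y :: s) := by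
  simp [cyclicPairs_cons]

lemma isChain_cyclicPairs (x : V) (s : List V) :
    IsChain (fun a b => (a, b) ∈ cyclicPairs (x :: s)) (x :: s ++ [x]) := by
  have h : (x :: s ++ [x]).zip (s ++ [x]) = cyclicPairs (x :: s) := by
    simpa [cyclicPairs_cons] using zip_append (l₁ := x :: s) (r₁ := [x]) (r₂ := []) (by simp)
  exact h ▸ isChain_mem_zip_cons x (s ++ [x])

lemma exists_rotate_eq_cons_cons_of_mem_cyclicPairs {l : List V} {x y : V} (hxy : x ≠ y)
    (h : (x, y) ∈ cyclicPairs l) : ∃ n s, l.rotate n = x :: y :: s := by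
  obtain ⟨n, q, hq⟩ := exists_rotate_eq_cons h
  rw [← cyclicPairs_rotate] at hq
  refine ⟨n, ?_⟩
  match hl : l.rotate n, hq with
  | [], hq => simp [cyclicPairs] at hq
  | [a], hq => simp [cyclicPairs] at hq; exact absurd (hq.1.1.symm.trans hq.1.2) hxy
  | a :: b :: s, hq => simp [cyclicPairs_cons] at hq; exact ⟨s, by rw [hq.1.1, hq.1.2]⟩

end CyclicPairs

section EdgesAvoid

open List

variable {V : Type*} {A B E : Finset (V × V)} {S T : List V}

def EdgesAvoid (E : Finset (V × V)) (S : List V) : Prop := ∀ p ∈ E, p.1 ∉ S ∧ p.2 ∉ S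

lemma EdgesAvoid.union [DecidableEq V] (hA : EdgesAvoid A S) (hB : EdgesAvoid B S) :
    EdgesAvoid (A ∪ B) S := by
  intro p hp
  rcases Finset.mem_union.mp hp with hp | hp
  exacts [hA p hp, hB p hp]

lemma EdgesAvoid.mono (h : EdgesAvoid E S) (hTS : T ⊆ S) : EdgesAvoid E T :=
  fun p hp => ⟨fun h1 => (h p hp).1 (hTS h1), fun h2 => (h p hp).2 (hTS h2)⟩

lemma edgesAvoid_cyclicPairs [DecidableEq V] {l : List V} (h : ∀ x ∈ l, x ∉ S) :
    EdgesAvoid (cyclicPairs l).toFinset S := fun _ hp =>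
  ⟨h _ (fst_mem_of_mem_cyclicPairs (mem_toFinset.mp hp)),
    h _ (snd_mem_of_mem_cyclicPairs (mem_toFinset.mp hp))⟩

variable [DecidableEq V] {x : V}

lemma EdgesAvoid.indeg_union_left (hB : EdgesAvoid B S) (hx : x ∈ S) :
    indeg (A ∪ B) x = indeg A x := by
  have hB' : B.filter (·.2 = x) = ∅ :=
    Finset.filter_false_of_mem fun p hp h => (hB p hp).2 (h ▸ hx)
  rw [indeg, indeg, Finset.filter_union, hB', Finset.union_empty]

lemma EdgesAvoid.indeg_union_right (hA : EdgesAvoid A S) (hx : x ∈ S) :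
    indeg (A ∪ B) x = indeg B x := by
  rw [Finset.union_comm, hA.indeg_union_left hx]

end EdgesAvoid

section EulerTour

open List

variable {V : Type*} [DecidableEq V] {E : Finset (V × V)} {l : List V}

lemma IsEulerTour.mem_iff (h : IsEulerTour E l) {p : V × V} : p ∈ cyclicPairs l ↔ p ∈ E := by
  rw [← h.2.2, mem_toFinset]

lemma IsEulerTour.rotate (h : IsEulerTour E l) (n : ℕ) : IsEulerTour E (l.rotate n) := by
  refine ⟨by simpa using h.1, ?_, ?_⟩
  · rw [cyclicPairs_rotate]; exact (rotate_perm _ _).nodup_iff.mpr h.2.1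
  · rw [cyclicPairs_rotate, ← h.2.2]; exact toFinset_eq_of_perm _ _ (rotate_perm _ _)

lemma IsEulerTour.length_eq (h : IsEulerTour E l) : l.length = E.card := by
  rw [← h.2.2, toFinset_card_of_nodup h.2.1, length_cyclicPairs]

lemma IsEulerTour.isChain {x : V} {s : List V} (h : IsEulerTour E (x :: s)) :
    IsChain (fun a b => (a, b) ∈ E) (x :: s ++ [x]) :=
  (isChain_cyclicPairs x s).imp fun _ _ => h.mem_iff.mp

lemma indeg_toFinset {L : List (V × V)} (h : L.Nodup) (x : V) :
    indeg L.toFinset x = (L.map Prod.snd).count x := by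
  rw [indeg, show L.toFinset.filter (·.2 = x) = (L.filter (·.2 = x)).toFinset by ext; simp,
    toFinset_card_of_nodup (h.filter _), ← countP_eq_length_filter, count_eq_countP, countP_map]
  rfl

lemma IsEulerTour.count_eq_indeg (h : IsEulerTour E l) (x : V) : l.count x = indeg E x := by
  rw [← h.2.2, indeg_toFinset h.2.1, map_snd_cyclicPairs, (rotate_perm l 1).count_eq]

lemma indeg_cyclicPairs {l : List V} (hl : l.Nodup) {x : V} (hx : x ∈ l) :
    indeg (cyclicPairs l).toFinset x = 1 := by
  rw [indeg_toFinset (nodup_cyclicPairs hl), map_snd_cyclicPairs, (rotate_perm l 1).count_eq,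
    count_eq_one_of_mem hl hx]

lemma isEulerTour_cyclicPairs (hl : l.Nodup) (hne : l ≠ []) :
    IsEulerTour (cyclicPairs l).toFinset l :=
  ⟨hne, nodup_cyclicPairs hl, rfl⟩

theorem uniqueEulerTour_cyclicPairs {l : List V} (hl : l.Nodup) (hne : l ≠ []) :
    UniqueEulerTour (cyclicPairs l).toFinset := by
  have hl' := isEulerTour_cyclicPairs hl hne
  refine ⟨l, hl', fun L hL => ?_⟩
  obtain ⟨x, s, rfl⟩ := exists_cons_of_ne_nil hne
  have hxL : x ∈ L := count_pos_iff.mp <| by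
    rw [hL.count_eq_indeg, indeg_cyclicPairs hl mem_cons_self]; exact Nat.one_pos
  obtain ⟨n, t, hn⟩ := exists_rotate_eq_cons hxL
  have ht := hL.rotate n
  rw [hn] at ht
  have hlen : (x :: s ++ [x]).length = (x :: t ++ [x]).length := by
    rw [length_append, length_append, hl'.length_eq, ht.length_eq]
  -- every vertex of a cycle has a unique successor, so the closed walks of both tours agree
  have hst : x :: s ++ [x] = x :: t ++ [x] :=
    (hl'.isChain.isPrefix_of_functional ht.isChain (fun _ _ _ _ hy hz =>
      snd_eq_of_mem_cyclicPairs hl (mem_toFinset.mp hy) (mem_toFinset.mp hz))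
      rfl hlen.le).eq_of_length hlen
  exact ⟨n, by rw [hn, append_cancel_right hst]⟩

end EulerTour

section Splice

open List

variable {V : Type*} [DecidableEq V] {E : Finset (V × V)} {v : V} {cl : List V}

lemma disjoint_cyclicPairs_cons (hcl : cl ≠ []) (hfresh : EdgesAvoid E cl) :
    Disjoint E (cyclicPairs (v :: cl)).toFinset := by
  obtain ⟨c, cl, rfl⟩ := exists_cons_of_ne_nil hcl
  refine Finset.disjoint_left.mpr fun p hpE hp => ?_
  rw [mem_toFinset, cyclicPairs_cons, cons_append, zip_cons_cons, mem_cons] at hp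
  rcases hp with rfl | hp
  · exact (hfresh _ hpE).2 mem_cons_self
  · exact (hfresh _ hpE).1 (of_mem_zip hp).1

lemma isEulerTour_union_cyclicPairs_iff (hnd : (v :: cl).Nodup)
    (hdisj : Disjoint E (cyclicPairs (v :: cl)).toFinset) (s : List V) :
    IsEulerTour (E ∪ (cyclicPairs (v :: cl)).toFinset) (v :: cl ++ v :: s) ↔
      IsEulerTour E (v :: s) := by
  have hcyc := nodup_cyclicPairs hnd
  simp only [IsEulerTour, ne_eq, reduceCtorEq, not_false_eq_true, true_and, append_eq_nil_iff,
    and_false, cyclicPairs_cons_append_cons, nodup_append, hcyc, toFinset_append]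
  constructor
  · rintro ⟨⟨hnds, hdisj'⟩, hE⟩
    have hdisjC : Disjoint (cyclicPairs (v :: s)).toFinset (cyclicPairs (v :: cl)).toFinset :=
      Finset.disjoint_left.mpr fun q hq hc =>
        hdisj' _ (mem_toFinset.mp hc) _ (mem_toFinset.mp hq) rfl
    refine ⟨hnds, ?_⟩
    rw [← Finset.union_sdiff_cancel_right hdisjC, Finset.union_comm, hE,
      Finset.union_sdiff_cancel_right hdisj]
  · rintro ⟨hnds, rfl⟩
    refine ⟨⟨hnds, fun p hp q hq hpq => ?_⟩, Finset.union_comm _ _⟩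
    exact Finset.disjoint_left.mp hdisj (mem_toFinset.mpr (hpq ▸ hq)) (mem_toFinset.mpr hp)

lemma card_union_cyclicPairs (hnd : (v :: cl).Nodup)
    (hdisj : Disjoint E (cyclicPairs (v :: cl)).toFinset) :
    (E ∪ (cyclicPairs (v :: cl)).toFinset).card = E.card + cl.length + 1 := by
  rw [Finset.card_union_of_disjoint hdisj, toFinset_card_of_nodup (nodup_cyclicPairs hnd),
    length_cyclicPairs, length_cons, Nat.add_assoc]

lemma IsEulerTour.exists_rotate_eq_cons_append_cons {L : List V}
    (hL : IsEulerTour (E ∪ (cyclicPairs (v :: cl)).toFinset) L) (hE : E.Nonempty)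
    (hcl : cl ≠ []) (hnd : (v :: cl).Nodup) (hfresh : EdgesAvoid E cl) :
    ∃ n s, L.rotate n = v :: cl ++ v :: s := by
  have hcard := card_union_cyclicPairs hnd (disjoint_cyclicPairs_cons hcl hfresh)
  obtain ⟨c, cl, rfl⟩ := exists_cons_of_ne_nil hcl
  have hvc : v ≠ c := fun h => (nodup_cons.mp hnd).1 (h ▸ mem_cons_self)
  obtain ⟨n, r, hn⟩ := exists_rotate_eq_cons_cons_of_mem_cyclicPairs hvc <| hL.mem_iff.mpr <|
    Finset.mem_union_right _ (mem_toFinset.mpr (mem_cyclicPairs_cons_cons v c cl))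
  have hT := hL.rotate n
  rw [hn] at hT
  -- the cycle's vertices other than `v` have a single out-edge, so a tour entering the cycle
  -- through `(v, c)` has to run around all of it
  have hfun : ∀ x ∈ (c :: cl ++ [v]).dropLast, ∀ y z,
      (x, y) ∈ E ∪ (cyclicPairs (v :: c :: cl)).toFinset →
      (x, z) ∈ E ∪ (cyclicPairs (v :: c :: cl)).toFinset → y = z := by
    intro x hx y z hy hz
    rw [dropLast_concat] at hx
    simp only [Finset.mem_union, mem_toFinset] at hy hz
    rcases hy with hy | hy
    · exact absurd hx (hfresh _ hy).1
    rcases hz with hz | hz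
    · exact absurd hx (hfresh _ hz).1
    exact snd_eq_of_mem_cyclicPairs hnd hy hz
  have hC : IsChain (fun a b => (a, b) ∈ E ∪ (cyclicPairs (v :: c :: cl)).toFinset)
      (c :: cl ++ [v]) :=
    (isChain_cyclicPairs v (c :: cl)).tail.imp fun _ _ h =>
      Finset.mem_union_right _ (mem_toFinset.mpr h)
  have hW : IsChain (fun a b => (a, b) ∈ E ∪ (cyclicPairs (v :: c :: cl)).toFinset) (c :: r) :=
    hT.isChain.tail.left_of_append
  have hlen := hT.length_eq
  obtain ⟨u, hu⟩ := hC.isPrefix_of_functional hW hfun rfl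
    (by simp only [length_cons, length_append, length_nil] at hlen hcard ⊢
        have := hE.card_pos; omega)
  exact ⟨n, u, by rw [hn, ← hu]; simp⟩

theorem UniqueEulerTour.union_cyclicPairs (hU : UniqueEulerTour E) (hv : indeg E v = 1)
    (hcl : cl ≠ []) (hnd : (v :: cl).Nodup) (hfresh : EdgesAvoid E cl) :
    UniqueEulerTour (E ∪ (cyclicPairs (v :: cl)).toFinset) := by
  have htour := isEulerTour_union_cyclicPairs_iff hnd (disjoint_cyclicPairs_cons hcl hfresh)
  obtain ⟨w, hw, huniq⟩ := hU
  have hcount : w.count v = 1 := hw.count_eq_indeg v ▸ hv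
  obtain ⟨k, t, hk⟩ := exists_rotate_eq_cons (count_pos_iff.mp (hcount ▸ Nat.one_pos))
  have ht : IsEulerTour E (v :: t) := hk ▸ hw.rotate k
  have hvt : v ∉ t := by
    have := ht.count_eq_indeg v
    rw [count_cons_self, hv] at this
    exact count_eq_zero.mp (by omega)
  refine ⟨v :: cl ++ v :: t, (htour t).mpr ht, fun L hL => ?_⟩
  have hE : E.Nonempty := Finset.card_pos.mp (ht.length_eq ▸ Nat.succ_pos _)
  obtain ⟨n, s, hn⟩ := hL.exists_rotate_eq_cons_append_cons hE hcl hnd hfresh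
  have hs : IsEulerTour E (v :: s) := (htour s).mp (hn ▸ hL.rotate n)
  have hts : t = s := tail_eq_of_isRotated_cons ((huniq _ hs).trans ⟨k, hk⟩).symm hvt
  exact ⟨n, by rw [hn, hts]⟩

end Splice

section Forest

open List

@[simp]
lemma PTree.labels_node (a : ℕ) (ts : List PTree) :
    (PTree.node a ts).labels = a :: labelsList ts := rfl

@[simp]
lemma labelsList_nil : labelsList [] = [] := rfl

@[simp]
lemma labelsList_cons (t : PTree) (ts : List PTree) :
    labelsList (t :: ts) = t.labels ++ labelsList ts := rfl

@[simp]
lemma labelsList_append (ts us : List PTree) :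
    labelsList (ts ++ us) = labelsList ts ++ labelsList us := by
  induction ts with
  | nil => rfl
  | cons t ts ih => simp [ih]

@[simp]
lemma PTree.label_node (a : ℕ) (ts : List PTree) : (PTree.node a ts).label = a := rfl

@[simp]
lemma PTree.children_node (a : ℕ) (ts : List PTree) : (PTree.node a ts).children = ts := rfl

def nonRootLabels (ts : List PTree) : List ℕ := labelsList (ts.flatMap PTree.children)

@[simp]
lemma nonRootLabels_cons_node (a : ℕ) (cs ts : List PTree) :
    nonRootLabels (.node a cs :: ts) = labelsList cs ++ nonRootLabels ts := by
  simp [nonRootLabels]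

@[simp]
lemma nonRootLabels_append (ts us : List PTree) :
    nonRootLabels (ts ++ us) = nonRootLabels ts ++ nonRootLabels us := by
  simp [nonRootLabels]

lemma labelsList_perm (ts : List PTree) :
    labelsList ts ~ ts.map PTree.label ++ nonRootLabels ts := by
  induction ts with
  | nil => rfl
  | cons t ts ih =>
    obtain ⟨a, cs⟩ := t
    simpa using (ih.append_left (labelsList cs)).trans (perm_append_comm_assoc _ _ _)

lemma map_label_subset_labelsList (ts : List PTree) : ts.map PTree.label ⊆ labelsList ts :=
  fun _ hx => (labelsList_perm ts).symm.subset (mem_append_left _ hx)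

lemma nonRootLabels_subset_labelsList (ts : List PTree) : nonRootLabels ts ⊆ labelsList ts :=
  fun _ hx => (labelsList_perm ts).symm.subset (mem_append_right _ hx)

lemma labelsList_node_cons_perm (a : ℕ) (cs ts : List PTree) :
    labelsList (.node a cs :: ts) ~
      (a :: cs.map PTree.label) ++ (nonRootLabels cs ++ labelsList ts) := by
  simpa using ((labelsList_perm cs).append_right _).cons a

@[simp]
lemma gEdgesList_nil : gEdgesList [] = [] := by
  simp [gEdgesList]

@[simp]
lemma gEdgesList_cons (t : PTree) (ts : List PTree) :
    gEdgesList (t :: ts) = gEdges false t ++ gEdgesList ts := by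
  simp [gEdgesList]

@[simp]
lemma gEdgesList_append (ts us : List PTree) :
    gEdgesList (ts ++ us) = gEdgesList ts ++ gEdgesList us := by
  induction ts with
  | nil => rfl
  | cons t ts ih => simp [ih]

@[simp]
lemma gEdges_false_node_nil (a : ℕ) : gEdges false (.node a []) = [] := by
  simp [gEdges]

lemma gEdges_false_node {cs : List PTree} (hcs : cs ≠ []) (a : ℕ) :
    gEdges false (.node a cs) = cyclicPairs (a :: cs.map PTree.label) ++ gEdgesList cs := by
  simp [gEdges, hcs]

lemma gEdges_true_node_singleton (a : ℕ) (t : PTree) :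
    gEdges true (.node a [t]) = gEdges false t := by
  simp [gEdges]

lemma gEdges_true_node {ts : List PTree} (hts : 2 ≤ ts.length) (a : ℕ) :
    gEdges true (.node a ts) = cyclicPairs (ts.map PTree.label) ++ gEdgesList ts := by
  have : ts ≠ [] := ne_nil_of_length_pos (by omega)
  simp [gEdges, this, show ¬ ts.length ≤ 1 by omega]

-- `E` is the part of `g(T)` built so far and `ts` a forest whose cycles are still to be added:
-- its roots already have in-degree one in `E`, and its other vertices are new.
theorem uniqueEulerTour_union_gEdgesList {E : Finset (ℕ × ℕ)} :
    ∀ (ts : List PTree), UniqueEulerTour E → (labelsList ts).Nodup →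
      EdgesAvoid E (nonRootLabels ts) → (∀ t ∈ ts, indeg E t.label = 1) →
      UniqueEulerTour (E ∪ (gEdgesList ts).toFinset)
  | [], hU, _, _, _ => by simpa using hU
  | .node a cs :: ts, hU, hnd, hfresh, hroot => by
    have hnd' : (labelsList cs ++ labelsList ts).Nodup := (nodup_cons.mp hnd).2
    obtain ⟨hcyc, -, hsep⟩ := nodup_append.mp ((labelsList_node_cons_perm a cs ts).nodup_iff.mp hnd)
    have hts : ∀ t ∈ ts, indeg E t.label = 1 := fun t ht => hroot t (mem_cons_of_mem _ ht)
    rcases eq_or_ne cs [] with rfl | hcs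
    · simpa using uniqueEulerTour_union_gEdgesList ts hU (by simpa using hnd')
        (hfresh.mono (by simp)) hts
    set K := (cyclicPairs (a :: cs.map PTree.label)).toFinset
    have hU' : UniqueEulerTour (E ∪ K) :=
      hU.union_cyclicPairs (by simpa using hroot _ mem_cons_self) (by simpa using hcs) hcyc
        (hfresh.mono (by simp [map_label_subset_labelsList]))
    have hKts : EdgesAvoid K (nonRootLabels cs ++ labelsList ts) :=
      edgesAvoid_cyclicPairs fun x hx h => hsep x hx x h rfl
    have hinner : nonRootLabels (cs ++ ts) ⊆ nonRootLabels cs ++ labelsList ts := by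
      simp [nonRootLabels_subset_labelsList]
    have hroot' : ∀ t ∈ cs ++ ts, indeg (E ∪ K) t.label = 1 := by
      intro t ht
      rcases mem_append.mp ht with ht | ht
      · have hmem : t.label ∈ cs.map PTree.label := mem_map_of_mem ht
        rw [hfresh.indeg_union_right (by
          rw [nonRootLabels_cons_node]
          exact mem_append_left _ (map_label_subset_labelsList cs hmem))]
        exact indeg_cyclicPairs hcyc (mem_cons_of_mem _ hmem)
      · rw [hKts.indeg_union_left (mem_append_right _
          (map_label_subset_labelsList ts (mem_map_of_mem ht)))]
        exact hts t ht
    have hU'' := uniqueEulerTour_union_gEdgesList (cs ++ ts) hU' (by simpa using hnd')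
      ((hfresh.mono (by simp [nonRootLabels_subset_labelsList])).union (hKts.mono hinner)) hroot'
    convert hU'' using 1
    ext p
    simp [gEdges_false_node hcs, K]
termination_by ts => (labelsList ts).length
decreasing_by all_goals simp

theorem uniqueEulerTour_cyclicPairs_append_gEdgesList {r : List ℕ} {ts : List PTree}
    (hne : r ≠ []) (hr : (r ++ nonRootLabels ts).Nodup) (hnd : (labelsList ts).Nodup)
    (hroots : ts.map PTree.label ⊆ r) :
    UniqueEulerTour (cyclicPairs r ++ gEdgesList ts).toFinset := by
  obtain ⟨hr, -, hsep⟩ := nodup_append.mp hr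
  rw [toFinset_append]
  exact uniqueEulerTour_union_gEdgesList ts (uniqueEulerTour_cyclicPairs hr hne) hnd
    (edgesAvoid_cyclicPairs fun x hx h => hsep x hx x h rfl)
    (fun t ht => indeg_cyclicPairs hr (hroots (mem_map_of_mem ht)))

end Forest

/-- For every `T ∈ L'ₙ`, the digraph `g(T)` has exactly one Eulerian tour up to cyclic
shift. -/
theorem gDigraph_unique_euler (n : ℕ) (hn : 2 ≤ n) (T : PTree) (hT : InL' n T) :
    UniqueEulerTour (gDigraph T) := by
  obtain ⟨⟨hnd, -, -, t₁, ts₁, h₁, hlabel⟩, t, ts, rfl, h2⟩ := hT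
  obtain ⟨rfl, -⟩ : t = t₁ ∧ ts = ts₁ := by simpa using h₁
  have hnd : (labelsList (t :: ts)).Nodup := (List.nodup_cons.mp hnd).2
  rcases ts with _ | ⟨t', ts⟩
  · -- `1` is the only child of the root, and it has children because `2` lies below it
    obtain ⟨b, cs⟩ := t
    have hcs : cs ≠ [] := by rintro rfl; simp_all
    rw [gDigraph, gEdges_true_node_singleton, gEdges_false_node hcs]
    exact uniqueEulerTour_cyclicPairs_append_gEdgesList (List.cons_ne_nil _ _)
      (by simpa using (labelsList_node_cons_perm b cs []).nodup_iff.mp hnd) (by simp_all)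
      (List.subset_cons_self _ _)
  · rw [gDigraph, gEdges_true_node (by simp)]
    exact uniqueEulerTour_cyclicPairs_append_gEdgesList (by simp)
      ((labelsList_perm _).nodup_iff.mp hnd) hnd (List.Subset.refl _)
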